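/- Fix positive integers t and n. The number of overpartitions of n with largest minus smallest part at most t and largest part not overlined when this difference equals t, equals the number of pairs (α, β) where α is a possibly empty partition of some n₁ into parts all equal to t, β is a nonempty overpartition of n − n₁ into parts at most t, and moreover the numbers of overlined parts agree in a refined sense: the count of such overpartitions of n with m overlined parts equals the count of such pairs with β having m overlined parts, for every m ≥ 0. -/

import Mathlib

/-- An overpartition: a multiset of parts together with the finite set of
overlined part sizes. -/
abbrev OP : Type := Multiset ℕ × Finset ℕ

/-- Validity: all parts positive, and every overlined size actually occurs as a part
(so at most one part of each size is overlined). -/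
def OP.IsValid (π : OP) : Prop := (∀ p ∈ π.1, 0 < p) ∧ ∀ p ∈ π.2, p ∈ π.1

/-- The weight (sum of parts). -/
def OP.wt (π : OP) : ℕ := π.1.sum

/-- The number of parts. -/
def OP.len (π : OP) : ℕ := Multiset.card π.1

/-- The number of overlined parts. -/
def OP.o (π : OP) : ℕ := π.2.card

/-- The largest part. -/
def OP.maxPart (π : OP) : ℕ := π.1.sup

/-- The smallest part. -/
noncomputable def OP.minPart (π : OP) : ℕ := sInf {p | p ∈ π.1}

/-- The number of parts equal to `t`. -/
def OP.mT (t : ℕ) (π : OP) : ℕ := π.1.count t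

/-- Membership in `G_t`: nonempty, valid, largest minus smallest part at most `t`,
and the largest part not overlined when this difference is exactly `t`. -/
def InG (t : ℕ) (π : OP) : Prop :=
  π.IsValid ∧ π.1 ≠ 0 ∧ π.maxPart - π.minPart ≤ t ∧
    (π.maxPart - π.minPart = t → π.maxPart ∉ π.2)

/-- Membership in `P_t`: nonempty, valid, all parts at most `t`, no part `t` overlined. -/
def InP (t : ℕ) (π : OP) : Prop :=
  π.IsValid ∧ π.1 ≠ 0 ∧ (∀ p ∈ π.1, p ≤ t) ∧ t ∉ π.2

/-- The map `φ`: each part is replaced by its residue mod `t` (deleted if zero,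
retaining its overline) together with `⌊part/t⌋` non-overlined copies of `t`. -/
def phi (t : ℕ) (π : OP) : OP :=
  (Multiset.replicate (π.1.map (· / t)).sum t + (π.1.map (· % t)).filter (· ≠ 0),
   (π.2.image (· % t)).erase 0)

/-- Membership in `B_t`: bipartitions whose first component has all parts equal to `t`
(none overlined) and whose second component is a nonempty overpartition with parts `≤ t`. -/
def InB (t : ℕ) (b : Multiset ℕ × OP) : Prop :=
  (∀ a ∈ b.1, a = t) ∧ b.2.IsValid ∧ b.2.1 ≠ 0 ∧ ∀ p ∈ b.2.1, p ≤ t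

/-- The map `ψ`: merge the two components, un-overlining any overlined `t`. -/
def psi (t : ℕ) (b : Multiset ℕ × OP) : OP := (b.1 + b.2.1, b.2.2.erase t)

/-!
Write each part `p` as `r + t q` with `r ∈ [1, t]`. The bijection sends `π ∈ G_t` to the pair
made of `Σ q` copies of `t` and the overpartition of the residues `r`, overlines kept. In `G_t`
two overlined parts never share a residue (they would be exactly `t` apart, the upper one being
the overlined largest part), so the number of overlined parts is preserved. Conversely, `G_t` is
closed under adding `t` to a smallest part, which keeps the residues, raises `Σ q` by one and is
undone by subtracting `t` from a largest part; so every `π ∈ G_t` is recovered from its residues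
by `Σ q` such steps.
-/

namespace OP

variable {t p p' : ℕ} {π : OP}

/-- Residues are taken in `1..t` rather than `0..t-1`, so that a multiple of `t` reduces to the
part `t`. -/
def residue (t p : ℕ) : ℕ := (p - 1) % t + 1

def level (t p : ℕ) : ℕ := (p - 1) / t

lemma residue_add_mul_level (hp : 0 < p) : residue t p + t * level t p = p := by
  have := Nat.mod_add_div (p - 1) t
  unfold residue level
  omega

lemma residue_le (ht : 0 < t) : residue t p ≤ t := Nat.mod_lt _ ht

lemma residue_of_le (hp : 0 < p) (hpt : p ≤ t) : residue t p = p := by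
  unfold residue
  rw [Nat.mod_eq_of_lt (by omega)]
  omega

lemma residue_add_self (hp : 0 < p) : residue t (p + t) = residue t p := by
  unfold residue
  rw [show p + t - 1 = p - 1 + t by omega, Nat.add_mod_right]

lemma level_add_self (ht : 0 < t) (hp : 0 < p) : level t (p + t) = level t p + 1 := by
  unfold level
  rw [show p + t - 1 = p - 1 + t by omega, Nat.add_div_right _ ht]

lemma level_eq_zero_iff (ht : 0 < t) (hp : 0 < p) : level t p = 0 ↔ p ≤ t := by
  unfold level
  rw [Nat.div_eq_zero_iff]
  omega

lemma eq_add_of_residue_eq (hp : 0 < p) (hp' : 0 < p') (h : residue t p = residue t p')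
    (hlt : p < p') (hle : p' ≤ p + t) : p' = p + t := by
  have e := residue_add_mul_level (t := t) hp
  have e' := residue_add_mul_level (t := t) hp'
  have h₁ : level t p < level t p' := by nlinarith
  have h₂ : level t p' ≤ level t p + 1 := by nlinarith
  have h₃ : level t p' = level t p + 1 := by omega
  rw [h₃, ← h] at e'
  linarith

lemma minPart_le (hp : p ∈ π.1) : π.minPart ≤ p := Nat.sInf_le hp

lemma minPart_mem (h : π.1 ≠ 0) : π.minPart ∈ π.1 :=
  Nat.sInf_mem (Multiset.exists_mem_of_ne_zero h)

lemma minPart_eq (hp : p ∈ π.1) (hle : ∀ p' ∈ π.1, p ≤ p') : π.minPart = p :=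
  le_antisymm (minPart_le hp) (hle _ (minPart_mem fun h => by simp [h] at hp))

lemma le_maxPart (hp : p ∈ π.1) : p ≤ π.maxPart := Multiset.le_sup hp

lemma maxPart_mem (h : π.1 ≠ 0) : π.maxPart ∈ π.1 := by
  obtain ⟨L, hL, hle⟩ := Multiset.exists_max_image id h
  rwa [show π.maxPart = L from le_antisymm (Multiset.sup_le.mpr hle) (le_maxPart hL)]

def IsWindow (t : ℕ) (π : OP) : Prop :=
  ∀ p ∈ π.1, ∀ p' ∈ π.1, p ≤ p' + t ∧ (p = p' + t → p ∉ π.2)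

lemma inG_iff : InG t π ↔ π.IsValid ∧ π.1 ≠ 0 ∧ π.IsWindow t := by
  constructor
  · rintro ⟨hv, hne, hdiff, htop⟩
    refine ⟨hv, hne, fun p hp p' hp' => ?_⟩
    have := le_maxPart hp
    have := minPart_le hp'
    have := le_maxPart hp'
    refine ⟨by omega, fun hpp' hov => ?_⟩
    have hpmax : π.maxPart = p := by omega
    exact htop (by omega) (hpmax ▸ hov)
  · rintro ⟨hv, hne, hw⟩
    have hmin := minPart_mem hne
    have hmax := maxPart_mem hne
    have := minPart_le hmax
    obtain ⟨hle, htop⟩ := hw _ hmax _ hmin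
    exact ⟨hv, hne, by omega, fun _ => htop (by omega)⟩

/-- The overline moves along only if the smallest part is the unique part of its size; otherwise
the new largest part would be overlined at distance `t` from the smallest. -/
noncomputable def raiseMin (t : ℕ) (π : OP) : OP :=
  ((π.minPart + t) ::ₘ π.1.erase π.minPart,
    if π.minPart ∈ π.2 ∧ π.minPart ∉ π.1.erase π.minPart then
      insert (π.minPart + t) (π.2.erase π.minPart)
    else π.2)

def lowerMax (t : ℕ) (π : OP) : OP :=
  ((π.maxPart - t) ::ₘ π.1.erase π.maxPart,
    if π.maxPart ∈ π.2 then insert (π.maxPart - t) (π.2.erase π.maxPart) else π.2)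

lemma inG_raiseMin (ht : 0 < t) (h : InG t π) : InG t (π.raiseMin t) := by
  obtain ⟨⟨hpos, hov⟩, hne, hw⟩ := inG_iff.mp h
  set s := π.minPart
  set M := π.1.erase s
  have hs : s ∈ π.1 := minPart_mem hne
  have hM : ∀ {p}, p ∈ M → p ∈ π.1 := Multiset.mem_of_mem_erase
  have hparts : ∀ {p}, p ∈ (π.raiseMin t).1 ↔ p = s + t ∨ p ∈ M := Multiset.mem_cons
  have hover : ∀ {p}, p ∈ (π.raiseMin t).2 → (p ∈ π.2 ∧ p ∈ M) ∨ (p = s + t ∧ s ∉ M) := by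
    intro p hp
    simp only [raiseMin] at hp
    split_ifs at hp with hmove
    · rcases Finset.mem_insert.mp hp with rfl | hp
      · exact Or.inr ⟨rfl, hmove.2⟩
      · obtain ⟨hps, hp⟩ := Finset.mem_erase.mp hp
        exact Or.inl ⟨hp, (Multiset.mem_erase_of_ne hps).mpr (hov p hp)⟩
    · by_cases hps : p = s
      · subst hps
        exact Or.inl ⟨hp, by tauto⟩
      · exact Or.inl ⟨hp, (Multiset.mem_erase_of_ne hps).mpr (hov p hp)⟩
  refine inG_iff.mpr ⟨⟨fun p hp => ?_, fun p hp => ?_⟩, Multiset.cons_ne_zero,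
    fun p hp p' hp' => ?_⟩
  · rcases hparts.mp hp with rfl | hp
    · exact Nat.add_pos_right _ ht
    · exact hpos p (hM hp)
  · rcases hover hp with ⟨_, hp⟩ | ⟨rfl, _⟩
    · exact hparts.mpr (Or.inr hp)
    · exact hparts.mpr (Or.inl rfl)
  · rcases hparts.mp hp with rfl | hp <;> rcases hparts.mp hp' with rfl | hp'
    · exact ⟨le_add_right le_rfl, fun _ => by omega⟩
    · have := minPart_le (hM hp')
      refine ⟨by omega, fun he hov' => ?_⟩
      have hp's : p' = s := by omega
      rcases hover hov' with ⟨hov', hmem⟩ | ⟨_, hsM⟩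
      · exact (hw _ (hM hmem) _ hs).2 rfl hov'
      · exact hsM (hp's ▸ hp')
    · have := (hw p (hM hp) s hs).1
      exact ⟨by omega, fun _ _ => by omega⟩
    · refine ⟨(hw _ (hM hp) _ (hM hp')).1, fun he hov' => ?_⟩
      rcases hover hov' with ⟨hov', _⟩ | ⟨rfl, hsM⟩
      · exact (hw _ (hM hp) _ (hM hp')).2 he hov'
      · exact hsM (show p' = s by omega ▸ hp')

lemma inG_lowerMax (ht : 0 < t) (h : InG t π) (hL : t < π.maxPart) : InG t (π.lowerMax t) := by
  obtain ⟨⟨hpos, hov⟩, hne, hw⟩ := inG_iff.mp h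
  set L := π.maxPart
  set M := π.1.erase L
  have hLmem : L ∈ π.1 := maxPart_mem hne
  have hM : ∀ {p}, p ∈ M → p ∈ π.1 := Multiset.mem_of_mem_erase
  have hparts : ∀ {p}, p ∈ (π.lowerMax t).1 ↔ p = L - t ∨ p ∈ M := Multiset.mem_cons
  have hover : ∀ {p}, p ∈ (π.lowerMax t).2 → (p ∈ π.2 ∧ p ≠ L) ∨ p = L - t := by
    intro p hp
    simp only [lowerMax] at hp
    split_ifs at hp with hLo
    · rcases Finset.mem_insert.mp hp with rfl | hp
      · exact Or.inr rfl
      · exact Or.inl (Finset.mem_erase.mp hp).symm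
    · exact Or.inl ⟨hp, fun hpL => hLo (by rwa [hpL] at hp)⟩
  refine inG_iff.mpr ⟨⟨fun p hp => ?_, fun p hp => ?_⟩, Multiset.cons_ne_zero,
    fun p hp p' hp' => ?_⟩
  · rcases hparts.mp hp with rfl | hp
    · omega
    · exact hpos p (hM hp)
  · rcases hover hp with ⟨hp, hpL⟩ | rfl
    · exact hparts.mpr (Or.inr ((Multiset.mem_erase_of_ne hpL).mpr (hov p hp)))
    · exact hparts.mpr (Or.inl rfl)
  · rcases hparts.mp hp with rfl | hp <;> rcases hparts.mp hp' with rfl | hp'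
    · exact ⟨by omega, fun _ => by omega⟩
    · have := (hw _ hLmem _ (hM hp')).1
      exact ⟨by omega, fun _ _ => by omega⟩
    · have := le_maxPart (hM hp)
      refine ⟨by omega, fun he hov' => ?_⟩
      rcases hover hov' with ⟨_, hpL⟩ | hpL <;> omega
    · refine ⟨(hw _ (hM hp) _ (hM hp')).1, fun he hov' => ?_⟩
      rcases hover hov' with ⟨hov', _⟩ | rfl
      · exact (hw _ (hM hp) _ (hM hp')).2 he hov'
      · have := (hw _ hLmem _ (hM hp')).1
        omega

lemma raiseMin_lowerMax (ht : 0 < t) (h : InG t π) (hL : t < π.maxPart) :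
    (π.lowerMax t).raiseMin t = π := by
  obtain ⟨-, hne, hw⟩ := inG_iff.mp h
  set L := π.maxPart
  set M := π.1.erase L
  have hLmem : L ∈ π.1 := maxPart_mem hne
  have hmin : (π.lowerMax t).minPart = L - t := by
    refine minPart_eq (Multiset.mem_cons_self _ _) fun p hp => ?_
    rcases Multiset.mem_cons.mp hp with rfl | hp
    · exact le_rfl
    · have := (hw _ hLmem _ (Multiset.mem_of_mem_erase hp)).1
      omega
  have hLt : L - t + t = L := by omega
  have hlow : π.lowerMax t =
      ((L - t) ::ₘ M, if L ∈ π.2 then insert (L - t) (π.2.erase L) else π.2) := rfl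
  rw [raiseMin, hmin, hlow]
  simp only [Multiset.erase_cons_head, hLt]
  refine Prod.ext (Multiset.cons_erase hLmem) ?_
  by_cases hLo : L ∈ π.2
  · have hLt_notMem : L - t ∉ π.1 := fun hmem => (hw _ hLmem _ hmem).2 hLt.symm hLo
    have hLt_notMem' : L - t ∉ π.2.erase L := fun hmem =>
      hLt_notMem (h.1.2 _ (Finset.mem_of_mem_erase hmem))
    simp only [if_pos hLo, Finset.mem_insert_self, true_and]
    rw [if_pos (fun hmem => hLt_notMem (Multiset.mem_of_mem_erase hmem)),
      Finset.erase_insert hLt_notMem', Finset.insert_erase hLo]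
  · simp only [if_neg hLo]
    rw [if_neg]
    rintro ⟨hmem, hnot⟩
    exact hnot ((Multiset.mem_erase_of_ne (by omega)).mpr (h.1.2 _ hmem))

def reduce (t : ℕ) (π : OP) : OP := (π.1.map (residue t), π.2.image (residue t))

def levelSum (t : ℕ) (π : OP) : ℕ := (π.1.map (level t)).sum

lemma reduce_raiseMin (hpos : ∀ p ∈ π.1, 0 < p) (hne : π.1 ≠ 0) :
    (π.raiseMin t).reduce t = π.reduce t := by
  have hs := minPart_mem hne
  have hres := residue_add_self (t := t) (hpos _ hs)
  refine Prod.ext ?_ ?_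
  · simp only [reduce, raiseMin, Multiset.map_cons, hres]
    rw [← Multiset.map_cons, Multiset.cons_erase hs]
  · simp only [reduce, raiseMin]
    split_ifs with hmove
    · rw [Finset.image_insert, hres, ← Finset.image_insert, Finset.insert_erase hmove.1]
    · rfl

lemma levelSum_raiseMin (ht : 0 < t) (hpos : ∀ p ∈ π.1, 0 < p) (hne : π.1 ≠ 0) :
    (π.raiseMin t).levelSum t = π.levelSum t + 1 := by
  have hs := minPart_mem hne
  conv_rhs => rw [levelSum, ← Multiset.cons_erase hs]
  simp only [levelSum, raiseMin, Multiset.map_cons, Multiset.sum_cons,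
    level_add_self ht (hpos _ hs)]
  ring

lemma levelSum_eq_zero_iff (ht : 0 < t) (hpos : ∀ p ∈ π.1, 0 < p) :
    π.levelSum t = 0 ↔ ∀ p ∈ π.1, p ≤ t := by
  simp only [levelSum, Multiset.sum_eq_zero_iff, Multiset.mem_map, forall_exists_index, and_imp,
    forall_apply_eq_imp_iff₂]
  exact forall₂_congr fun p hp => level_eq_zero_iff ht (hpos p hp)

lemma reduce_eq_self (hv : π.IsValid) (hle : ∀ p ∈ π.1, p ≤ t) : π.reduce t = π := by
  have hres : ∀ p ∈ π.1, residue t p = p := fun p hp => residue_of_le (hv.1 p hp) (hle p hp)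
  refine Prod.ext ?_ ?_
  · exact (Multiset.map_congr rfl hres).trans (Multiset.map_id' _)
  · exact (Finset.image_congr fun p hp => hres p (hv.2 p hp)).trans Finset.image_id'

lemma wt_eq (hpos : ∀ p ∈ π.1, 0 < p) : π.wt = (π.reduce t).wt + t * π.levelSum t := by
  simp only [wt, reduce, levelSum, ← Multiset.sum_map_mul_left, ← Multiset.sum_map_add]
  conv_lhs => rw [← Multiset.map_id' π.1]
  exact congrArg _ (Multiset.map_congr rfl fun p hp => (residue_add_mul_level (hpos p hp)).symm)

lemma o_reduce (h : InG t π) : (π.reduce t).o = π.o := by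
  obtain ⟨⟨hpos, hov⟩, -, hw⟩ := inG_iff.mp h
  refine Finset.card_image_of_injOn fun p hp p' hp' he => ?_
  have hp1 := hov p hp
  have hp1' := hov p' hp'
  by_contra hne
  rcases Nat.lt_or_gt_of_ne hne with hlt | hlt
  · exact (hw _ hp1' _ hp1).2
      (eq_add_of_residue_eq (hpos _ hp1) (hpos _ hp1') he hlt (hw _ hp1' _ hp1).1) hp'
  · exact (hw _ hp1 _ hp1').2
      (eq_add_of_residue_eq (hpos _ hp1') (hpos _ hp1) he.symm hlt (hw _ hp1 _ hp1').1) hp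

lemma inG_of_forall_le (hv : π.IsValid) (hne : π.1 ≠ 0) (hle : ∀ p ∈ π.1, p ≤ t) : InG t π := by
  refine inG_iff.mpr ⟨hv, hne, fun p hp p' hp' => ?_⟩
  have := hle p hp
  have := hv.1 p' hp'
  exact ⟨by omega, fun _ => by omega⟩

lemma inG_iterate_raiseMin (ht : 0 < t) (h : InG t π) (k : ℕ) : InG t ((raiseMin t)^[k] π) := by
  induction k with
  | zero => exact h
  | succ k ih => rw [Function.iterate_succ_apply']; exact inG_raiseMin ht ih

lemma reduce_iterate_raiseMin (ht : 0 < t) (h : InG t π) (k : ℕ) :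
    ((raiseMin t)^[k] π).reduce t = π.reduce t := by
  induction k with
  | zero => rfl
  | succ k ih =>
    obtain ⟨⟨hpos, -⟩, hne, -⟩ := inG_iterate_raiseMin ht h k
    rw [Function.iterate_succ_apply', reduce_raiseMin hpos hne, ih]

lemma levelSum_iterate_raiseMin (ht : 0 < t) (h : InG t π) (k : ℕ) :
    ((raiseMin t)^[k] π).levelSum t = π.levelSum t + k := by
  induction k with
  | zero => rfl
  | succ k ih =>
    obtain ⟨⟨hpos, -⟩, hne, -⟩ := inG_iterate_raiseMin ht h k
    rw [Function.iterate_succ_apply', levelSum_raiseMin ht hpos hne, ih, add_assoc]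

lemma iterate_raiseMin_reduce (ht : 0 < t) (k : ℕ) :
    ∀ π : OP, InG t π → π.levelSum t = k → (raiseMin t)^[k] (π.reduce t) = π := by
  induction k with
  | zero =>
    intro π h hk
    exact reduce_eq_self h.1 ((levelSum_eq_zero_iff ht h.1.1).mp hk)
  | succ k ih =>
    intro π h hk
    have hpos := h.1.1
    have hL : t < π.maxPart := by
      by_contra! hL
      have := (levelSum_eq_zero_iff ht hpos).mpr fun p hp => (le_maxPart hp).trans hL
      omega
    have hlow := inG_lowerMax ht h hL
    have hup := raiseMin_lowerMax ht h hL
    have hk' : (π.lowerMax t).levelSum t = k := by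
      have := levelSum_raiseMin ht hlow.1.1 hlow.2.1
      rw [hup] at this
      omega
    rw [Function.iterate_succ_apply', ← congrArg (reduce t) hup,
      reduce_raiseMin hlow.1.1 hlow.2.1, ih _ hlow hk', hup]

def toPair (t : ℕ) (π : OP) : Multiset ℕ × OP := (Multiset.replicate (π.levelSum t) t, π.reduce t)

noncomputable def ofPair (t : ℕ) (b : Multiset ℕ × OP) : OP := (raiseMin t)^[Multiset.card b.1] b.2

lemma inB_toPair (ht : 0 < t) (h : InG t π) : InB t (π.toPair t) := by
  obtain ⟨⟨-, hov⟩, hne, -⟩ := h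
  refine ⟨fun a => Multiset.eq_of_mem_replicate, ⟨fun p hp => ?_, fun p hp => ?_⟩, ?_,
    fun p hp => ?_⟩
  · obtain ⟨q, -, rfl⟩ := Multiset.mem_map.mp hp
    exact Nat.succ_pos _
  · obtain ⟨q, hq, rfl⟩ := Finset.mem_image.mp hp
    exact Multiset.mem_map_of_mem _ (hov q hq)
  · exact Multiset.map_eq_zero.not.mpr hne
  · obtain ⟨q, -, rfl⟩ := Multiset.mem_map.mp hp
    exact residue_le ht

lemma inG_ofPair (ht : 0 < t) {b : Multiset ℕ × OP} (hb : InB t b) : InG t (ofPair t b) :=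
  inG_iterate_raiseMin ht (inG_of_forall_le hb.2.1 hb.2.2.1 hb.2.2.2) _

lemma toPair_ofPair (ht : 0 < t) {b : Multiset ℕ × OP} (hb : InB t b) :
    toPair t (ofPair t b) = b := by
  obtain ⟨hα, hv, hne, hle⟩ := hb
  have hβ := inG_of_forall_le hv hne hle
  refine Prod.ext ?_ ?_
  · rw [toPair, ofPair, levelSum_iterate_raiseMin ht hβ, (levelSum_eq_zero_iff ht hv.1).mpr hle,
      zero_add]
    exact (Multiset.eq_replicate_card.mpr hα).symm
  · rw [toPair, ofPair, reduce_iterate_raiseMin ht hβ, reduce_eq_self hv hle]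

lemma ofPair_toPair (ht : 0 < t) (h : InG t π) : ofPair t (toPair t π) = π := by
  rw [ofPair, toPair, Multiset.card_replicate]
  exact iterate_raiseMin_reduce ht _ π h rfl

lemma sum_toPair (hpos : ∀ p ∈ π.1, 0 < p) :
    (π.toPair t).1.sum + (π.toPair t).2.1.sum = π.wt := by
  rw [wt_eq (t := t) hpos, toPair, Multiset.sum_replicate, smul_eq_mul, mul_comm, add_comm]
  rfl

end OP

open OP

lemma Nat.card_subtype_eq_of_inverse {α β : Type*} {P : α → Prop} {Q : β → Prop}
    (f : α → β) (g : β → α) (hf : ∀ x, P x → Q (f x)) (hg : ∀ y, Q y → P (g y))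
    (hgf : ∀ x, P x → g (f x) = x) (hfg : ∀ y, Q y → f (g y) = y) :
    Nat.card {x // P x} = Nat.card {y // Q y} :=
  Nat.card_congr ⟨fun x => ⟨f x, hf x x.2⟩, fun y => ⟨g y, hg y y.2⟩,
    fun x => Subtype.ext (hgf x x.2), fun y => Subtype.ext (hfg y y.2)⟩

theorem G_equinumerous_B (t : ℕ) (ht : 0 < t) (n : ℕ) :
    Nat.card {π : OP // InG t π ∧ π.wt = n} =
      Nat.card {b : Multiset ℕ × OP // InB t b ∧ b.1.sum + b.2.1.sum = n} ∧
    ∀ m : ℕ, Nat.card {π : OP // InG t π ∧ π.wt = n ∧ π.o = m} =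
      Nat.card {b : Multiset ℕ × OP // InB t b ∧ b.1.sum + b.2.1.sum = n ∧ b.2.o = m} := by
  have hsum : ∀ π, InG t π → (toPair t π).1.sum + (toPair t π).2.1.sum = π.wt :=
    fun π h => sum_toPair h.1.1
  have hwt : ∀ b, InB t b → (ofPair t b).wt = b.1.sum + b.2.1.sum := fun b hb => by
    rw [← hsum _ (inG_ofPair ht hb), toPair_ofPair ht hb]
  have ho : ∀ b, InB t b → (ofPair t b).o = b.2.o := fun b hb => by
    rw [← o_reduce (inG_ofPair ht hb)]
    exact congrArg (fun b => b.2.o) (toPair_ofPair ht hb)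
  refine ⟨?_, fun m => ?_⟩
  · exact Nat.card_subtype_eq_of_inverse (toPair t) (ofPair t)
      (fun π h => ⟨inB_toPair ht h.1, (hsum π h.1).trans h.2⟩)
      (fun b h => ⟨inG_ofPair ht h.1, (hwt b h.1).trans h.2⟩)
      (fun π h => ofPair_toPair ht h.1) (fun b h => toPair_ofPair ht h.1)
  · exact Nat.card_subtype_eq_of_inverse (toPair t) (ofPair t)
      (fun π h => ⟨inB_toPair ht h.1, (hsum π h.1).trans h.2.1, (o_reduce h.1).trans h.2.2⟩)
      (fun b h => ⟨inG_ofPair ht h.1, (hwt b h.1).trans h.2.1, (ho b h.1).trans h.2.2⟩)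
      (fun π h => ofPair_toPair ht h.1) (fun b h => toPair_ofPair ht h.1)
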